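/- For every triple z = (z₁,z₂,z₃) ∈ ℤ³ with corresponding linking matrix A ∈ Lk(3), the stabilizer of A in Γ₃ (under the Γ₃ action on Lk(3)) equals the preimage under f of the stabilizer of z in ({±1})³ ⋊ S₃ (under the natural action on ℤ³); consequently the stabilizer of A in Γ₃ has exactly twice as many elements as the stabilizer of z in ({±1})³ ⋊ S₃. -/
import Mathlib


/-- An element `(ε₀, ε₁, …, ε_μ, p)` of the Whitten group `Γ_μ`:
a sign `ε₀ ∈ {±1}`, signs `ε₁, …, ε_μ` (indexed here by `Fin μ`, so `eps i` is `ε_{i+1}`),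
and a permutation `p ∈ S_μ`. -/
@[ext]
structure Whitten (mu : ℕ) where
  e0 : ℤˣ
  eps : Fin mu → ℤˣ
  perm : Equiv.Perm (Fin mu)

namespace Whitten

variable {mu : ℕ}

/-- The Whitten multiplication
`(ε₀,ε₁,…,ε_μ,p) * (ε₀',ε₁',…,ε_μ',q) = (ε₀ε₀', ε₁ε'_{p(1)}, …, ε_με'_{p(μ)}, qp)`. -/
instance : Mul (Whitten mu) :=
  ⟨fun a b => ⟨a.e0 * b.e0, fun i => a.eps i * b.eps (a.perm i), b.perm * a.perm⟩⟩

instance : One (Whitten mu) := ⟨⟨1, fun _ => 1, 1⟩⟩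

instance : Inv (Whitten mu) :=
  ⟨fun a => ⟨a.e0⁻¹, fun i => (a.eps (a.perm⁻¹ i))⁻¹, a.perm⁻¹⟩⟩

@[simp] lemma mul_e0 (a b : Whitten mu) : (a * b).e0 = a.e0 * b.e0 := rfl
@[simp] lemma mul_eps (a b : Whitten mu) (i : Fin mu) :
    (a * b).eps i = a.eps i * b.eps (a.perm i) := rfl
@[simp] lemma mul_perm (a b : Whitten mu) : (a * b).perm = b.perm * a.perm := rfl
@[simp] lemma one_e0 : (1 : Whitten mu).e0 = 1 := rfl
@[simp] lemma one_eps (i : Fin mu) : (1 : Whitten mu).eps i = 1 := rfl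
@[simp] lemma one_perm : (1 : Whitten mu).perm = 1 := rfl
@[simp] lemma inv_e0 (a : Whitten mu) : (a⁻¹).e0 = a.e0⁻¹ := rfl
@[simp] lemma inv_eps (a : Whitten mu) (i : Fin mu) :
    (a⁻¹).eps i = (a.eps (a.perm⁻¹ i))⁻¹ := rfl
@[simp] lemma inv_perm (a : Whitten mu) : (a⁻¹).perm = a.perm⁻¹ := rfl

/-- The Whitten group `Γ_μ`. -/
instance : Group (Whitten mu) where
  mul_assoc a b c := by
    ext i <;> simp [mul_assoc, Equiv.Perm.mul_apply]
  one_mul a := by ext i <;> simp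
  mul_one a := by ext i <;> simp
  inv_mul_cancel a := by ext i <;> simp

end Whitten

/-- An element `(δ₁, …, δ_μ, p)` of the semidirect product `({±1})^μ ⋊ S_μ`,
in which `S_μ` acts by permuting coordinates, with the multiplication
`(δ₁,…,δ_μ,p) * (δ₁',…,δ_μ',q) = (δ₁δ'_{p(1)}, …, δ_μδ'_{p(μ)}, qp)`
analogous to that of the Whitten group. -/
@[ext]
structure PermProd (mu : ℕ) where
  eps : Fin mu → ℤˣ
  perm : Equiv.Perm (Fin mu)

namespace PermProd

variable {mu : ℕ}

instance : Mul (PermProd mu) :=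
  ⟨fun a b => ⟨fun i => a.eps i * b.eps (a.perm i), b.perm * a.perm⟩⟩

instance : One (PermProd mu) := ⟨⟨fun _ => 1, 1⟩⟩

instance : Inv (PermProd mu) :=
  ⟨fun a => ⟨fun i => (a.eps (a.perm⁻¹ i))⁻¹, a.perm⁻¹⟩⟩

@[simp] lemma mul_eps (a b : PermProd mu) (i : Fin mu) :
    (a * b).eps i = a.eps i * b.eps (a.perm i) := rfl
@[simp] lemma mul_perm (a b : PermProd mu) : (a * b).perm = b.perm * a.perm := rfl
@[simp] lemma one_eps (i : Fin mu) : (1 : PermProd mu).eps i = 1 := rfl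
@[simp] lemma one_perm : (1 : PermProd mu).perm = 1 := rfl
@[simp] lemma inv_eps (a : PermProd mu) (i : Fin mu) :
    (a⁻¹).eps i = (a.eps (a.perm⁻¹ i))⁻¹ := rfl
@[simp] lemma inv_perm (a : PermProd mu) : (a⁻¹).perm = a.perm⁻¹ := rfl

/-- The group `({±1})^μ ⋊ S_μ`, where `S_μ` acts by permuting coordinates. -/
instance : Group (PermProd mu) where
  mul_assoc a b c := by
    ext i <;> simp [mul_assoc, Equiv.Perm.mul_apply]
  one_mul a := by ext i <;> simp
  mul_one a := by ext i <;> simp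
  inv_mul_cancel a := by ext i <;> simp

end PermProd

/-- The product `ε = ε₀ ε₁ ε₂ ε₃` of all the signs of an element of `Γ₃`. -/
def whittenEpsProd (γ : Whitten 3) : ℤˣ :=
  γ.e0 * (γ.eps 0 * (γ.eps 1 * γ.eps 2))

/-- The map `f : Γ₃ → ({±1})³ ⋊ S₃`,
`f(ε₀, ε₁, ε₂, ε₃, p) = (ε₁ε, ε₂ε, ε₃ε, p)` where `ε = ε₀ε₁ε₂ε₃`. -/
def whittenToPerm (γ : Whitten 3) : PermProd 3 :=
  ⟨fun i => γ.eps i * whittenEpsProd γ, γ.perm⟩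

/-- `Lk n` is the set of symmetric `n × n` integer matrices with zeros on the diagonal. -/
def Lk (n : ℕ) : Set (Matrix (Fin n) (Fin n) ℤ) :=
  {A | A.IsSymm ∧ ∀ i, A i i = 0}

/-- The action of the Whitten group `Γ_n` on `n × n` linking matrices:
`(γ · A)_{ij} = ε₀ ε_i ε_j A_{p(i) p(j)}` for `γ = (ε₀, ε₁, …, ε_n, p)`. -/
def lkAct {n : ℕ} (γ : Whitten n) (A : Matrix (Fin n) (Fin n) ℤ) :
    Matrix (Fin n) (Fin n) ℤ :=
  Matrix.of fun i j =>
    (γ.e0 : ℤ) * (γ.eps i : ℤ) * (γ.eps j : ℤ) * A (γ.perm i) (γ.perm j)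

/-- The correspondence between triples `(z₁, z₂, z₃) ∈ ℤ³` and linking matrices in `Lk 3`:
`A₂₃ = A₃₂ = z₁`, `A₁₃ = A₃₁ = z₂`, `A₁₂ = A₂₁ = z₃` (here written with indices `0,1,2`). -/
def tripleToMatrix (z : Fin 3 → ℤ) : Matrix (Fin 3) (Fin 3) ℤ :=
  !![0, z 2, z 1; z 2, 0, z 0; z 1, z 0, 0]

/-- The natural action of `({±1})^n ⋊ S_n` on `ℤ^n`:
`(δ₁, …, δ_n, q) · (z₁, …, z_n) = (δ₁ z_{q(1)}, …, δ_n z_{q(n)})`. -/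
def natAct {n : ℕ} (g : PermProd n) (z : Fin n → ℤ) : Fin n → ℤ :=
  fun i => (g.eps i : ℤ) * z (g.perm i)

lemma cast_sq (u : ℤˣ) : (u:ℤ)^2 = 1 := by rcases Int.units_eq_one_or u with h|h <;> simp [h]

lemma key (γ : Whitten 3) (z : Fin 3 → ℤ) :
    lkAct γ (tripleToMatrix z) = tripleToMatrix (natAct (whittenToPerm γ) z) := by
  obtain ⟨e0, eps, p⟩ := γ
  obtain ⟨a, ha⟩ : ∃ a, p 0 = a := ⟨_, rfl⟩
  obtain ⟨b, hb⟩ : ∃ b, p 1 = b := ⟨_, rfl⟩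
  obtain ⟨c, hc⟩ : ∃ c, p 2 = c := ⟨_, rfl⟩
  fin_cases a <;> fin_cases b <;> fin_cases c <;>
    first
    | exact absurd (p.injective (ha.trans hb.symm)) (by decide)
    | exact absurd (p.injective (ha.trans hc.symm)) (by decide)
    | exact absurd (p.injective (hb.trans hc.symm)) (by decide)
    | (ext i j
       fin_cases i <;> fin_cases j <;>
         simp [lkAct, tripleToMatrix, natAct, whittenToPerm, whittenEpsProd, ha, hb, hc] <;>
         ring_nf <;> simp [cast_sq])
lemma tripleToMatrix_inj : Function.Injective tripleToMatrix := by
  intro x y h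
  funext i
  have h01 := congrFun (congrFun h 0) 1
  have h02 := congrFun (congrFun h 0) 2
  have h12 := congrFun (congrFun h 1) 2
  fin_cases i <;> simp [tripleToMatrix] at h01 h02 h12 <;> assumption

/-- The 2-to-1 structure of `whittenToPerm`. -/
def whittenEquiv : Whitten 3 ≃ ℤˣ × PermProd 3 where
  toFun γ := (whittenEpsProd γ, whittenToPerm γ)
  invFun x := ⟨x.2.eps 0 * x.2.eps 1 * x.2.eps 2, fun i => x.2.eps i * x.1, x.2.perm⟩
  left_inv γ := by
    obtain ⟨e0, eps, p⟩ := γ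
    ext i
    · rcases Int.units_eq_one_or e0 with h|h <;>
      rcases Int.units_eq_one_or (eps 0) with h0|h0 <;>
      rcases Int.units_eq_one_or (eps 1) with h1|h1 <;>
      rcases Int.units_eq_one_or (eps 2) with h2|h2 <;>
        simp [whittenToPerm, whittenEpsProd, h, h0, h1, h2]
    · fin_cases i <;>
      rcases Int.units_eq_one_or e0 with h|h <;>
      rcases Int.units_eq_one_or (eps 0) with h0|h0 <;>
      rcases Int.units_eq_one_or (eps 1) with h1|h1 <;>
      rcases Int.units_eq_one_or (eps 2) with h2|h2 <;>
        simp [whittenToPerm, whittenEpsProd, h, h0, h1, h2]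
    · rfl
  right_inv x := by
    obtain ⟨e, g⟩ := x
    obtain ⟨eps, p⟩ := g
    ext i
    · rcases Int.units_eq_one_or e with h|h <;>
      rcases Int.units_eq_one_or (eps 0) with h0|h0 <;>
      rcases Int.units_eq_one_or (eps 1) with h1|h1 <;>
      rcases Int.units_eq_one_or (eps 2) with h2|h2 <;>
        simp [whittenToPerm, whittenEpsProd, h, h0, h1, h2]
    all_goals (try rfl)
    fin_cases i <;>
      rcases Int.units_eq_one_or e with h|h <;>
      rcases Int.units_eq_one_or (eps 0) with h0|h0 <;>
      rcases Int.units_eq_one_or (eps 1) with h1|h1 <;>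
      rcases Int.units_eq_one_or (eps 2) with h2|h2 <;>
        simp [whittenToPerm, whittenEpsProd, h, h0, h1, h2]
/-- For every triple `z ∈ ℤ³` with corresponding linking matrix `A ∈ Lk 3`, the stabilizer
of `A` in `Γ₃` equals the preimage under `f` of the stabilizer of `z` in `({±1})³ ⋊ S₃`;
consequently the former has exactly twice as many elements as the latter. -/
theorem stabilizer_tripleToMatrix_eq_preimage (z : Fin 3 → ℤ) :
    ({γ : Whitten 3 | lkAct γ (tripleToMatrix z) = tripleToMatrix z} =
      whittenToPerm ⁻¹' {g : PermProd 3 | natAct g z = z}) ∧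
    Nat.card {γ : Whitten 3 | lkAct γ (tripleToMatrix z) = tripleToMatrix z} =
      2 * Nat.card {g : PermProd 3 | natAct g z = z} := by
  have hset : {γ : Whitten 3 | lkAct γ (tripleToMatrix z) = tripleToMatrix z} =
      whittenToPerm ⁻¹' {g : PermProd 3 | natAct g z = z} := by
    ext γ
    simp only [Set.mem_setOf_eq, Set.mem_preimage, key]
    exact ⟨fun h => tripleToMatrix_inj h, fun h => congrArg tripleToMatrix h⟩
  refine ⟨hset, ?_⟩
  rw [hset]
  have e : ↥(whittenToPerm ⁻¹' {g : PermProd 3 | natAct g z = z}) ≃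
      ℤˣ × ↥{g : PermProd 3 | natAct g z = z} :=
    { toFun := fun γ => (whittenEpsProd γ.1, ⟨whittenToPerm γ.1, γ.2⟩)
      invFun := fun x => ⟨whittenEquiv.symm (x.1, x.2.1), by
        show whittenToPerm _ ∈ {g : PermProd 3 | natAct g z = z}
        have h2 : whittenToPerm (whittenEquiv.symm (x.1, x.2.1)) = x.2.1 :=
          congrArg Prod.snd (whittenEquiv.apply_symm_apply (x.1, x.2.1))
        rw [h2]; exact x.2.2⟩
      left_inv := fun γ => Subtype.ext (whittenEquiv.symm_apply_apply γ.1)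
      right_inv := fun x => by
        have h := whittenEquiv.apply_symm_apply (x.1, x.2.1)
        have h1 : whittenEpsProd (whittenEquiv.symm (x.1, x.2.1)) = x.1 :=
          congrArg Prod.fst h
        have h2 : whittenToPerm (whittenEquiv.symm (x.1, x.2.1)) = x.2.1 :=
          congrArg Prod.snd h
        exact Prod.ext h1 (Subtype.ext h2) }
  rw [Nat.card_congr e, Nat.card_prod]
  congr 1
  rw [Nat.card_eq_fintype_card]
  rfl
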